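/- The invariant S_o is invariant under the second homotopy move: if P₁ = (𝒜,(xAByBAz)) with |A| = τ(|B|) and P₂ = (𝒜∖{A,B},(xyz)), then S_o(P₁) = S_o(P₂). In particular l_{P₁}(D) = l_{P₂}(D) for every D ∈ 𝒜∖{A,B}, and ε(A)+ε(B) = 0 in the relevant coefficient group. -/

import Mathlib

/-- A phrase over alphabet `α`: a flattened list of entries where `none` is the
component separator `|` and `some (n, a)` is an occurrence of the letter with
name `n` and projection `a ∈ α`. -/
abbrev Phrase (α : Type) := List (Option (ℕ × α))

/-- `P` is a nanophrase: every occurring letter occurs exactly twice, and a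
letter name determines its projection. -/
def isNanoP {α : Type} [DecidableEq α] (P : Phrase α) : Prop :=
  ∀ p ∈ P.reduceOption, P.reduceOption.count p = 2 ∧
    ∀ q ∈ P.reduceOption, q.1 = p.1 → q.2 = p.2

/-- The three `(Q,R,S)`-homotopy moves on phrases. -/
inductive PMove {α : Type} (Q : Set α) (R : Set (α × α)) (S : Set (α × α × α)) :
    Phrase α → Phrase α → Prop
  | m1 (x y : Phrase α) (n : ℕ) (a : α) (h : a ∈ Q) :
      PMove Q R S (x ++ [some (n, a), some (n, a)] ++ y) (x ++ y)
  | m2 (x y z : Phrase α) (n m : ℕ) (a b : α) (h : (a, b) ∈ R) :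
      PMove Q R S
        (x ++ [some (n, a), some (m, b)] ++ y ++ [some (m, b), some (n, a)] ++ z)
        (x ++ y ++ z)
  | m3 (x y z t : Phrase α) (n m p : ℕ) (a b c : α) (h : (a, b, c) ∈ S) :
      PMove Q R S
        (x ++ [some (n, a), some (m, b)] ++ y ++ [some (n, a), some (p, c)] ++ z ++
          [some (m, b), some (p, c)] ++ t)
        (x ++ [some (m, b), some (n, a)] ++ y ++ [some (p, c), some (n, a)] ++ z ++
          [some (p, c), some (m, b)] ++ t)

/-- Isomorphism of phrases: an injective renaming of letter names preserving
projections and the phrase structure. -/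
def PIso {α : Type} (P₁ P₂ : Phrase α) : Prop :=
  ∃ f : Equiv.Perm ℕ, P₂ = P₁.map (Option.map fun q => (f q.1, q.2))

/-- One step of `(Q,R,S)`-homotopy: an isomorphism, a move, or an inverse move. -/
def PStep {α : Type} (Q : Set α) (R : Set (α × α)) (S : Set (α × α × α))
    (P₁ P₂ : Phrase α) : Prop :=
  PIso P₁ P₂ ∨ PMove Q R S P₁ P₂ ∨ PMove Q R S P₂ P₁

/-- `(Q,R,S)`-homotopy of phrases. -/
def PHomotopic {α : Type} (Q : Set α) (R : Set (α × α)) (S : Set (α × α × α)) :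
    Phrase α → Phrase α → Prop :=
  Relation.ReflTransGen (PStep Q R S)

/-- The number of components (length) of a phrase. -/
def compCount {α : Type} (P : Phrase α) : ℕ := (P.filter fun o => o.isNone).length + 1

/-- The data of a complete representative system for the orbits of the
involution `τ`: orbits are indexed by `1,…,l+m`, the first `l` being free
(size 2) and the last `m` fixed points; `rep q` is the chosen representative of
the `q`-th orbit and `orb a` is the index of the orbit of `a`. -/
def IsCRS {α : Type} (τ : α → α) (l m : ℕ) (rep : ℕ → α) (orb : α → ℕ) : Prop :=
  Function.Involutive τ ∧
  (∀ a : α, 1 ≤ orb a ∧ orb a ≤ l + m) ∧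
  (∀ a : α, a = rep (orb a) ∨ a = τ (rep (orb a))) ∧
  (∀ q : ℕ, 1 ≤ q → q ≤ l + m → orb (rep q) = q) ∧
  (∀ q : ℕ, 1 ≤ q → q ≤ l + m → (q ≤ l ↔ τ (rep q) ≠ rep q)) ∧
  (∀ a : α, orb (τ a) = orb a)

/-- The subgroup of `∏_{(p,q)} ℤ` by which one quotients to obtain the mixed
group `∏ K_{(p,q)}` with `K_{(p,q)} = ℤ` if `p,q ≤ l` and `ℤ/2ℤ` otherwise. -/
def Ksub (l : ℕ) : AddSubgroup ((ℕ × ℕ) → ℤ) where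
  carrier := {f | ∀ pq : ℕ × ℕ,
    (pq.1 ≤ l ∧ pq.2 ≤ l → f pq = 0) ∧ (¬(pq.1 ≤ l ∧ pq.2 ≤ l) → (2 : ℤ) ∣ f pq)}
  zero_mem' := fun pq => ⟨fun _ => rfl, fun _ => dvd_zero 2⟩
  add_mem' := by
    intro f g hf hg pq
    refine ⟨fun h => ?_, fun h => ?_⟩
    · show f pq + g pq = 0
      rw [(hf pq).1 h, (hg pq).1 h, add_zero]
    · exact dvd_add ((hf pq).2 h) ((hg pq).2 h)
  neg_mem' := by
    intro f hf pq
    refine ⟨fun h => ?_, fun h => ?_⟩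
    · show -f pq = 0
      rw [(hf pq).1 h, neg_zero]
    · exact dvd_neg.mpr ((hf pq).2 h)

/-- The group `∏ K_{(p,q)}`, `K_{(p,q)} = ℤ` if `p,q ≤ l`, else `ℤ/2ℤ`. -/
def KG (l : ℕ) := ((ℕ × ℕ) → ℤ) ⧸ Ksub l

instance (l : ℕ) : AddCommGroup (KG l) := QuotientAddGroup.Quotient.addCommGroup _

/-- The canonical projection onto `∏ K_{(p,q)}`. -/
def kmk (l : ℕ) : ((ℕ × ℕ) → ℤ) → KG l := QuotientAddGroup.mk

/-- The basis vector `e_{(p,q)}`. -/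
def ehat (p q : ℕ) : (ℕ × ℕ) → ℤ := fun pq => if pq = (p, q) then 1 else 0

/-- The coordinate of `v ∈ ∏ K_{(p,q)}` at `pq` is zero (as an element of `ℤ`
if `pq` is a free-free pair, of `ℤ/2ℤ` otherwise). -/
def ZeroCoord (l : ℕ) (v : KG l) (pq : ℕ × ℕ) : Prop :=
  ∀ f : (ℕ × ℕ) → ℤ, kmk l f = v →
    ((pq.1 ≤ l ∧ pq.2 ≤ l → f pq = 0) ∧ (¬(pq.1 ≤ l ∧ pq.2 ≤ l) → (2 : ℤ) ∣ f pq))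

/-- `v` is of type (i): its coordinates `(r,s)` with `r > l` all vanish. -/
def TypeI (l : ℕ) (v : ℕ → KG l) : Prop :=
  ∀ (j r s : ℕ), l < r → ZeroCoord l (v j) (r, s)

/-- `v` is of type (ii): its coordinates `(r,s)` with `r ≤ l` all vanish. -/
def TypeII (l : ℕ) (v : ℕ → KG l) : Prop :=
  ∀ (j r s : ℕ), r ≤ l → ZeroCoord l (v j) (r, s)

/-- `ε(a) = +1` if `a` is a chosen representative, `−1` otherwise. -/
def eps {α : Type} [DecidableEq α] (rep : ℕ → α) (orb : α → ℕ) (a : α) : ℤ :=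
  if a = rep (orb a) then 1 else -1

/-- Flatten a phrase, recording for each occurrence its letter name, projection,
and the (1-based) index of the component in which it occurs. -/
def flat {α : Type} : Phrase α → ℕ → List (ℕ × α × ℕ)
  | [], _ => []
  | Option.none :: P, i => flat P (i + 1)
  | Option.some q :: P, i => (q.1, q.2, i) :: flat P i

/-- The positions (0-based, in the flattening of `P`) of the occurrences of the
letter named `n`. -/
def posL {α : Type} (P : Phrase α) (n : ℕ) : List ℕ :=
  ((((flat P 1).zipIdx.map Prod.swap).filter fun iq => iq.2.1 = n).map Prod.fst)

/-- Position of the first occurrence of the letter named `n`. -/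
def pos1 {α : Type} (P : Phrase α) (n : ℕ) : ℕ := (posL P n).headI

/-- Position of the second occurrence of the letter named `n`. -/
def pos2 {α : Type} (P : Phrase α) (n : ℕ) : ℕ := (posL P n).getLast!

/-- The projection in `α` of the letter named `n`. -/
def projP {α : Type} [Inhabited α] (P : Phrase α) (n : ℕ) : α :=
  (((flat P 1).filter fun q => q.1 = n).headI).2.1

/-- The component containing the first occurrence of the letter named `n`. -/
def comp1 {α : Type} [Inhabited α] (P : Phrase α) (n : ℕ) : ℕ :=
  ((((flat P 1).filter fun q => q.1 = n).map fun q => q.2.2)).headI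

/-- The component containing the second occurrence of the letter named `n`. -/
def comp2 {α : Type} [Inhabited α] (P : Phrase α) (n : ℕ) : ℕ :=
  ((((flat P 1).filter fun q => q.1 = n).map fun q => q.2.2)).getLast!

/-- Fukunaga's `σ_P^j(A,B)` (a lift to `∏ ℤ`; its class in `∏ K_{(p,q)}` is the
actual value): `± e_{(p,q)}` according to the interlacement pattern of `A,B`,
the component of the relevant occurrence of `B`, and whether `|B|` is a chosen
representative; `0` if `A` and `B` are not interlaced. -/
def sigmaHat {α : Type} [DecidableEq α] [Inhabited α] (rep : ℕ → α) (orb : α → ℕ)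
    (P : Phrase α) (j : ℕ) (nA nB : ℕ) : (ℕ × ℕ) → ℤ :=
  if pos1 P nA < pos1 P nB ∧ pos1 P nB < pos2 P nA ∧ pos2 P nA < pos2 P nB ∧
      comp2 P nB = j then
    eps rep orb (projP P nB) • ehat (orb (projP P nA)) (orb (projP P nB))
  else if pos1 P nB < pos1 P nA ∧ pos1 P nA < pos2 P nB ∧ pos2 P nB < pos2 P nA ∧
      comp1 P nB = j then
    (-eps rep orb (projP P nB)) • ehat (orb (projP P nA)) (orb (projP P nB))
  else 0

/-- The list of letter names occurring in `P`. -/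
def lettersP {α : Type} (P : Phrase α) : List ℕ :=
  ((P.reduceOption.map Prod.fst)).dedup

/-- The list `𝒜_j` of letter names occurring in the `j`-th component of `P`. -/
def compLetters {α : Type} (P : Phrase α) (j : ℕ) : List ℕ :=
  ((((flat P 1).filter fun q => q.2.2 = j).map fun q => q.1)).dedup

/-- A lift of `l_{P,j}(A) = Σ_{X ∈ 𝒜} σ_P^j(A,X)`. -/
def lHat {α : Type} [DecidableEq α] [Inhabited α] (rep : ℕ → α) (orb : α → ℕ)
    (P : Phrase α) (nA : ℕ) (j : ℕ) : (ℕ × ℕ) → ℤ :=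
  ((lettersP P).map fun nX => sigmaHat rep orb P j nA nX).sum

/-- `l_P(A) ∈ (∏ K_{(p,q)})^k`, as a function of the component index `j`. -/
def lP {α : Type} [DecidableEq α] [Inhabited α] (l : ℕ) (rep : ℕ → α) (orb : α → ℕ)
    (P : Phrase α) (nA : ℕ) : ℕ → KG l :=
  fun j => kmk l (lHat rep orb P nA j)

open Classical in
/-- The type (i) (`ℤ`-valued) part of `(B_P)_j`:
`(B_P)_j(v) = Σ_{A ∈ 𝒜_j, l_P(A) = v} ε(A)` if `v` is of type (i), else `0`. -/
noncomputable def B1 {α : Type} [DecidableEq α] [Inhabited α] (l : ℕ)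
    (rep : ℕ → α) (orb : α → ℕ) (P : Phrase α) (j : ℕ) (v : ℕ → KG l) : ℤ :=
  if TypeI l v then
    (((compLetters P j).filter fun nA => lP l rep orb P nA = v).map fun nA =>
      eps rep orb (projP P nA)).sum
  else 0

open Classical in
/-- The type (ii) (`ℤ/2ℤ`-valued) part of `(B_P)_j`:
`(B_P)_j(v) = Σ_{A ∈ 𝒜_j, l_P(A) = v} ε(A) mod 2` if `v` is of type (ii), else `0`. -/
noncomputable def B2 {α : Type} [DecidableEq α] [Inhabited α] (l : ℕ)
    (rep : ℕ → α) (orb : α → ℕ) (P : Phrase α) (j : ℕ) (v : ℕ → KG l) : ZMod 2 :=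
  if TypeII l v then
    ((((compLetters P j).filter fun nA => lP l rep orb P nA = v).map fun nA =>
      eps rep orb (projP P nA)).sum : ZMod 2)
  else 0

/-- Equality of the invariants `S_o` of two nanophrases: the maps `(B_P)_j`
agree (on nonzero vectors, where they are defined). -/
def SoEq {α : Type} [DecidableEq α] [Inhabited α] (l : ℕ) (rep : ℕ → α)
    (orb : α → ℕ) (P₁ P₂ : Phrase α) : Prop :=
  ∀ (j : ℕ) (v : ℕ → KG l), v ≠ 0 →
    B1 l rep orb P₁ j v = B1 l rep orb P₂ j v ∧
    B2 l rep orb P₁ j v = B2 l rep orb P₂ j v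

/-! The positions of the letters of `xyz` reappear in `xAByBAz` shifted by the strictly monotone
map `m2Shift`, so the interlacement signs among them are unchanged. As `A` and `B` stand side by
side at both ends, every other letter `D` interlaces `A` exactly when it interlaces `B`, in the
same pattern and with the same components; hence `σ(D,A) + σ(D,B)` is a multiple of
`(ε(τ b) + ε(b)) e_{(p,q)}`, which is `0` in `K_{(p,q)}`: `ε(τ b) = -ε(b)` on a free orbit, and
`K_{(p,q)} = ℤ/2ℤ` on a fixed one. So `l(D)` is unchanged, and `l(A) = l(B)` because `A` and `B`
are not interlaced with each other. In `(B_P)_j` the letters `A`, `B` thus contribute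
`ε(τ b) + ε(b)` together at `v = l(A)`; this is `0` mod 2 always, `0` in `ℤ` on a free orbit, and
on a fixed orbit `l(A)` is concentrated on coordinates `(p,q)` with `p > l`, so it is not a
nonzero vector of type (i). -/

section Flat
variable {α : Type}

def nsep (P : Phrase α) : ℕ := P.countP fun o => o.isNone

theorem flat_append (P Q : Phrase α) (i : ℕ) :
    flat (P ++ Q) i = flat P i ++ flat Q (i + nsep P) := by
  induction P generalizing i with
  | nil => simp [flat, nsep]
  | cons o P ih =>
    cases o with
    | none => simp [flat, nsep, ih, Nat.add_assoc, Nat.add_comm 1]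
    | some q => simp [flat, nsep, ih]

theorem map_flat (P : Phrase α) (i : ℕ) :
    (flat P i).map (fun t => (t.1, t.2.1)) = P.reduceOption := by
  induction P generalizing i with
  | nil => rfl
  | cons o P ih =>
    cases o with
    | none => simpa [flat] using ih _
    | some q => simp [flat, ih]

theorem mem_lettersP {P : Phrase α} {n : ℕ} :
    n ∈ lettersP P ↔ ∃ p ∈ P.reduceOption, p.1 = n := by
  simp [lettersP]

theorem mem_lettersP_iff_flat {P : Phrase α} {n : ℕ} (i : ℕ) :
    n ∈ lettersP P ↔ ∃ t ∈ flat P i, t.1 = n := by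
  simp [mem_lettersP, ← map_flat P i]

theorem mem_compLetters {P : Phrase α} {j n : ℕ} :
    n ∈ compLetters P j ↔ ∃ t ∈ flat P 1, t.1 = n ∧ t.2.2 = j := by
  simp [compLetters, and_comm]

theorem not_mem_lettersP_iff_flat {P : Phrase α} {n : ℕ} (i : ℕ) :
    n ∉ lettersP P ↔ ∀ t ∈ flat P i, t.1 ≠ n := by
  simp only [mem_lettersP_iff_flat i, not_exists, not_and, ne_eq]

theorem mem_lettersP_of_mem_compLetters {P : Phrase α} {j n : ℕ}
    (hn : n ∈ compLetters P j) : n ∈ lettersP P := by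
  obtain ⟨t, ht, rfl, -⟩ := mem_compLetters.1 hn
  exact (mem_lettersP_iff_flat 1).2 ⟨t, ht, rfl⟩

theorem nodup_lettersP (P : Phrase α) : (lettersP P).Nodup := List.nodup_dedup _

theorem nodup_compLetters (P : Phrase α) (j : ℕ) : (compLetters P j).Nodup :=
  List.nodup_dedup _

def posFrom : List (ℕ × α × ℕ) → ℕ → ℕ → List ℕ
  | [], _, _ => []
  | t :: L, n, k => if t.1 = n then k :: posFrom L n (k + 1) else posFrom L n (k + 1)

theorem posFrom_eq (L : List (ℕ × α × ℕ)) (n k : ℕ) :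
    (((L.zipIdx k).map Prod.swap).filter fun iq => iq.2.1 = n).map Prod.fst =
      posFrom L n k := by
  induction L generalizing k with
  | nil => rfl
  | cons t L ih => by_cases h : t.1 = n <;> simp [posFrom, h, ih]

theorem posL_eq_posFrom (P : Phrase α) (n : ℕ) : posL P n = posFrom (flat P 1) n 0 :=
  posFrom_eq _ _ _

@[simp]
theorem posFrom_cons_of_eq {t : ℕ × α × ℕ} {n : ℕ} (h : t.1 = n) (L : List (ℕ × α × ℕ))
    (k : ℕ) : posFrom (t :: L) n k = k :: posFrom L n (k + 1) := by
  simp [posFrom, h]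

@[simp]
theorem posFrom_cons_of_ne {t : ℕ × α × ℕ} {n : ℕ} (h : t.1 ≠ n) (L : List (ℕ × α × ℕ))
    (k : ℕ) : posFrom (t :: L) n k = posFrom L n (k + 1) := by
  simp [posFrom, h]

theorem posFrom_append (L M : List (ℕ × α × ℕ)) (n k : ℕ) :
    posFrom (L ++ M) n k = posFrom L n k ++ posFrom M n (k + L.length) := by
  induction L generalizing k with
  | nil => simp [posFrom]
  | cons t L ih =>
    by_cases h : t.1 = n <;> simp [posFrom, h, ih, Nat.add_assoc, Nat.add_comm 1]

theorem posFrom_add (L : List (ℕ × α × ℕ)) (n k c : ℕ) :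
    posFrom L n (k + c) = (posFrom L n k).map (· + c) := by
  induction L generalizing k with
  | nil => rfl
  | cons t L ih => by_cases h : t.1 = n <;> simp [posFrom, h, ← ih, Nat.add_right_comm]

theorem posFrom_bounds {L : List (ℕ × α × ℕ)} {n k p : ℕ} (hp : p ∈ posFrom L n k) :
    k ≤ p ∧ p < k + L.length := by
  induction L generalizing k with
  | nil => simp [posFrom] at hp
  | cons t L ih =>
    by_cases h : t.1 = n <;> simp only [posFrom, h, if_true, if_false, List.mem_cons] at hp
    · rcases hp with rfl | hp
      · simp
      · have := ih hp; simp only [List.length_cons]; omega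
    · have := ih hp; simp only [List.length_cons]; omega

theorem posFrom_eq_nil_iff {L : List (ℕ × α × ℕ)} {n k : ℕ} :
    posFrom L n k = [] ↔ ∀ t ∈ L, t.1 ≠ n := by
  induction L generalizing k with
  | nil => simp [posFrom]
  | cons t L ih => by_cases h : t.1 = n <;> simp [posFrom, h, ih]

theorem filter_fst_eq_nil {L : List (ℕ × α × ℕ)} {n : ℕ} (h : ∀ t ∈ L, t.1 ≠ n) :
    L.filter (fun t => t.1 = n) = [] :=
  List.filter_eq_nil_iff.2 fun t ht => by simpa using h t ht

theorem posL_ne_nil_of_mem {P : Phrase α} {n : ℕ} (hn : n ∈ lettersP P) : posL P n ≠ [] := by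
  obtain ⟨t, ht, rfl⟩ := (mem_lettersP_iff_flat 1).1 hn
  rw [posL_eq_posFrom, Ne, posFrom_eq_nil_iff]
  exact fun h => h t ht rfl

theorem pos1_eq_of_posL_eq_map {P Q : Phrase α} {n : ℕ} {f : ℕ → ℕ}
    (h : posL P n = (posL Q n).map f) (hne : posL Q n ≠ []) : pos1 P n = f (pos1 Q n) := by
  unfold pos1
  rw [h]
  cases hq : posL Q n with
  | nil => exact absurd hq hne
  | cons p L => rfl

theorem pos2_eq_of_posL_eq_map {P Q : Phrase α} {n : ℕ} {f : ℕ → ℕ}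
    (h : posL P n = (posL Q n).map f) (hne : posL Q n ≠ []) : pos2 P n = f (pos2 Q n) := by
  unfold pos2
  rw [h, List.getLast!_eq_getLast?_getD, List.getLast!_eq_getLast?_getD, List.getLast?_map,
    List.getLast?_eq_some_getLast hne]
  rfl

def MapsLetter (f : ℕ → ℕ) (Q P : Phrase α) (n : ℕ) : Prop :=
  pos1 P n = f (pos1 Q n) ∧ pos2 P n = f (pos2 Q n) ∧
    (flat P 1).filter (fun t => t.1 = n) = (flat Q 1).filter (fun t => t.1 = n)

/-- No occurrence of `nX` lies weakly between the first occurrences of `nA` and `nB`, nor between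
their second occurrences. -/
def Twins (P : Phrase α) (nA nB nX : ℕ) : Prop :=
  ∀ q ∈ [pos1 P nX, pos2 P nX],
    (q < pos1 P nA ↔ q < pos1 P nB) ∧ (pos1 P nA < q ↔ pos1 P nB < q) ∧
    (q < pos2 P nA ↔ q < pos2 P nB) ∧ (pos2 P nA < q ↔ pos2 P nB < q)

end Flat

section Interlacement
variable {α : Type} [DecidableEq α] [Inhabited α] (rep : ℕ → α) (orb : α → ℕ)

theorem sigmaHat_self (P : Phrase α) (j n : ℕ) : sigmaHat rep orb P j n n = 0 := by
  simp [sigmaHat]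

theorem sigmaHat_eq_zero_of_nested {P : Phrase α} {nA nB : ℕ} (h1 : pos1 P nA < pos1 P nB)
    (h2 : pos2 P nB < pos2 P nA) (j : ℕ) :
    sigmaHat rep orb P j nA nB = 0 ∧ sigmaHat rep orb P j nB nA = 0 := by
  constructor <;> unfold sigmaHat <;> rw [if_neg (by omega), if_neg (by omega)]

theorem sigmaHat_congr {P Q : Phrase α} {f : ℕ → ℕ} (hf : StrictMono f) {nA nB : ℕ}
    (hA : MapsLetter f Q P nA) (hB : MapsLetter f Q P nB) (j : ℕ) :
    sigmaHat rep orb P j nA nB = sigmaHat rep orb Q j nA nB := by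
  obtain ⟨hA1, hA2, hAo⟩ := hA
  obtain ⟨hB1, hB2, hBo⟩ := hB
  unfold sigmaHat projP comp1 comp2
  rw [hA1, hA2, hB1, hB2, hAo, hBo]
  simp only [hf.lt_iff_lt]

theorem sigmaHat_left_eq_of_twins {P : Phrase α} {nA nB nX : ℕ} (hT : Twins P nA nB nX)
    (horb : orb (projP P nA) = orb (projP P nB)) (j : ℕ) :
    sigmaHat rep orb P j nA nX = sigmaHat rep orb P j nB nX := by
  obtain ⟨h1, h2, h3, -⟩ := hT _ (List.mem_cons_self ..)
  obtain ⟨-, h6, h7, h8⟩ := hT (pos2 P nX) (by simp)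
  unfold sigmaHat
  simp only [horb, h1, h2, h3, h6, h7, h8]

theorem sigmaHat_right_add_of_twins {P : Phrase α} {nA nB nD : ℕ} (hT : Twins P nA nB nD)
    (hc1 : comp1 P nA = comp1 P nB) (hc2 : comp2 P nA = comp2 P nB) (j : ℕ) :
    ∃ c : ℤ, sigmaHat rep orb P j nD nA + sigmaHat rep orb P j nD nB =
      c • (eps rep orb (projP P nA) • ehat (orb (projP P nD)) (orb (projP P nA)) +
        eps rep orb (projP P nB) • ehat (orb (projP P nD)) (orb (projP P nB))) := by
  obtain ⟨h1, h2, h3, -⟩ := hT _ (List.mem_cons_self ..)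
  obtain ⟨-, h6, h7, h8⟩ := hT (pos2 P nD) (by simp)
  unfold sigmaHat
  simp only [hc1, hc2, h1, h2, h3, h6, h7, h8]
  split_ifs
  · exact ⟨1, by module⟩
  · exact ⟨-1, by module⟩
  · exact ⟨0, by module⟩

theorem lHat_apply_eq_zero {P : Phrase α} {n j : ℕ} {pq : ℕ × ℕ}
    (h : pq.1 ≠ orb (projP P n)) : lHat rep orb P n j pq = 0 := by
  rw [lHat, Pi.list_sum_apply, List.map_map]
  refine List.sum_eq_zero fun c hc => ?_
  obtain ⟨nX, -, rfl⟩ := List.mem_map.1 hc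
  have he : ehat (orb (projP P n)) (orb (projP P nX)) pq = 0 :=
    if_neg fun hpq => h (by rw [hpq])
  simp only [Function.comp, sigmaHat]
  split_ifs <;> simp [he]

theorem lP_eq_zero_of_typeI {l : ℕ} {P : Phrase α} {n : ℕ}
    (hv : TypeI l (lP l rep orb P n)) (hlt : l < orb (projP P n)) : lP l rep orb P n = 0 := by
  funext j
  refine (QuotientAddGroup.eq_zero_iff _).2 fun pq => ?_
  by_cases hpq : pq.1 = orb (projP P n)
  · exact hv j pq.1 pq.2 (hpq ▸ hlt) _ rfl
  · rw [lHat_apply_eq_zero rep orb hpq]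
    exact ⟨fun _ => rfl, fun _ => dvd_zero 2⟩

end Interlacement

section Orbits
variable {α : Type} {τ : α → α} {l m : ℕ} {rep : ℕ → α} {orb : α → ℕ}

theorem IsCRS.orb_tau (hcrs : IsCRS τ l m rep orb) (a : α) : orb (τ a) = orb a :=
  hcrs.2.2.2.2.2 a

theorem lt_orb_of_tau_eq (hcrs : IsCRS τ l m rep orb) {b : α} (hb : τ b = b) : l < orb b := by
  obtain ⟨hinv, hbd, hrep, -, hfree, -⟩ := hcrs
  have hfix : τ (rep (orb b)) = rep (orb b) := by
    rcases hrep b with h | h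
    · rwa [← h]
    · have hτ : τ b = rep (orb b) := (congrArg τ h).trans (hinv _)
      rw [← hτ, hb, hb]
  by_contra! hle
  exact (hfree _ (hbd b).1 (hbd b).2).1 hle hfix

variable [DecidableEq α]

theorem eps_eq_one_or_neg_one (a : α) : eps rep orb a = 1 ∨ eps rep orb a = -1 := by
  unfold eps; split_ifs <;> simp

theorem eps_tau_add_eps (hcrs : IsCRS τ l m rep orb) {b : α} (hb : τ b ≠ b) :
    eps rep orb (τ b) + eps rep orb b = 0 := by
  obtain ⟨hinv, -, hrep, -, -, horb⟩ := hcrs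
  unfold eps
  rw [horb]
  rcases hrep b with h | h
  · rw [if_neg (fun h' => hb (h'.trans h.symm)), if_pos h]; rfl
  · have hτ : τ b = rep (orb b) := (congrArg τ h).trans (hinv _)
    rw [if_pos hτ, if_neg (fun h' => hb (hτ.trans h'.symm))]; rfl

theorem cast_eps_tau_add_eps (hcrs : IsCRS τ l m rep orb) (b : α) :
    ((eps rep orb (τ b) + eps rep orb b : ℤ) : ZMod 2) = 0 := by
  by_cases hb : τ b = b
  · rw [hb]
    rcases eps_eq_one_or_neg_one (rep := rep) (orb := orb) b with h | h <;> rw [h] <;> decide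
  · rw [eps_tau_add_eps hcrs hb, Int.cast_zero]

theorem eps_tau_add_eps_smul_ehat_mem_Ksub (hcrs : IsCRS τ l m rep orb) (b : α) (r : ℕ) :
    (eps rep orb (τ b) + eps rep orb b) • ehat r (orb b) ∈ Ksub l := by
  by_cases hb : τ b = b
  · have hlt := lt_orb_of_tau_eq hcrs hb
    rw [hb, ← two_smul ℤ (eps rep orb b), smul_assoc]
    intro pq
    refine ⟨fun hpq => ?_, fun _ => dvd_mul_right _ _⟩
    have hne : pq ≠ (r, orb b) := fun h => by rw [h] at hpq; omega
    simp [ehat, hne]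
  · rw [eps_tau_add_eps hcrs hb, zero_smul]
    exact zero_mem _

end Orbits

section WeightSum
variable {α : Type} [DecidableEq α] [Inhabited α] (l : ℕ) (rep : ℕ → α) (orb : α → ℕ)

open Classical

noncomputable def bSum (P : Phrase α) (j : ℕ) (v : ℕ → KG l) : ℤ :=
  (((compLetters P j).filter fun nA => lP l rep orb P nA = v).map fun nA =>
    eps rep orb (projP P nA)).sum

theorem B1_eq (P : Phrase α) (j : ℕ) (v : ℕ → KG l) :
    B1 l rep orb P j v = if TypeI l v then bSum l rep orb P j v else 0 := rfl

theorem B2_eq (P : Phrase α) (j : ℕ) (v : ℕ → KG l) :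
    B2 l rep orb P j v = if TypeII l v then (bSum l rep orb P j v : ZMod 2) else 0 := rfl

theorem bSum_eq_add_of_perm {P Q : Phrase α} {j : ℕ} {L : List ℕ}
    (hperm : (compLetters P j).Perm (L ++ compLetters Q j))
    (hQ : ∀ n ∈ compLetters Q j, lP l rep orb P n = lP l rep orb Q n ∧ projP P n = projP Q n)
    (v : ℕ → KG l) :
    bSum l rep orb P j v =
      ((L.filter fun n => lP l rep orb P n = v).map fun n => eps rep orb (projP P n)).sum +
        bSum l rep orb Q j v := by
  unfold bSum
  rw [((hperm.filter _).map _).sum_eq, List.filter_append, List.map_append, List.sum_append]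
  congr 1
  rw [List.filter_congr fun n hn => by rw [(hQ n hn).1]]
  exact congrArg List.sum (List.map_congr_left fun n hn => by
    rw [(hQ n (List.mem_of_mem_filter hn)).2])

end WeightSum

theorem isNanoP.fst_ne_of_perm {α : Type} [DecidableEq α] {P : Phrase α} (hP : isNanoP P)
    {p q : ℕ × α} {R : List (ℕ × α)} (hperm : P.reduceOption.Perm (p :: p :: q :: q :: R)) :
    p.1 ≠ q.1 ∧ ∀ r ∈ R, r.1 ≠ p.1 := by
  have hmem : p :: p :: q :: q :: R ⊆ P.reduceOption := hperm.symm.subset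
  obtain ⟨hcount, hdet⟩ := hP p (hmem (by simp))
  rw [hperm.count_eq] at hcount
  have hqp : q ≠ p := by
    rintro rfl
    simp at hcount
  have hpR : p ∉ R := by
    intro h
    have := List.count_pos_iff.2 h
    simp [hqp] at hcount
    omega
  refine ⟨fun h => hqp (Prod.ext h.symm (hdet q (hmem (by simp)) h.symm)), fun r hr h => ?_⟩
  exact hpR (Prod.ext h (hdet r (hmem (by simp [hr])) h) ▸ hr)

/-- The position in the flattening of `xAByBAz` of the entry at position `p` in that of `xyz`,
where `E` and `Y` are the lengths of the flattenings of `x` and `y`. -/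
def m2Shift (E Y p : ℕ) : ℕ := if p < E then p else if p < E + Y then p + 2 else p + 4

theorem strictMono_m2Shift (E Y : ℕ) : StrictMono (m2Shift E Y) := by
  intro p q h
  unfold m2Shift
  split_ifs <;> omega

section SecondMove
variable {α : Type} (x y z : Phrase α) (nA nB : ℕ) (a b : α)

def m2Source : Phrase α :=
  x ++ [some (nA, a), some (nB, b)] ++ y ++ [some (nB, b), some (nA, a)] ++ z

theorem reduceOption_m2Source_perm [DecidableEq α] :
    (m2Source x y z nA nB a b).reduceOption.Perm
      ((nA, a) :: (nA, a) :: (nB, b) :: (nB, b) :: (x ++ y ++ z).reduceOption) := by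
  rw [List.perm_iff_count]
  intro r
  simp only [m2Source, List.append_assoc, List.cons_append, List.nil_append,
    List.reduceOption_append, List.reduceOption_cons_of_some, List.count_append, List.count_cons,
    beq_iff_eq]
  split_ifs <;> omega

theorem m2Source_letters_of_isNanoP [DecidableEq α] (h : isNanoP (m2Source x y z nA nB a b)) :
    nA ≠ nB ∧ nA ∉ lettersP (x ++ y ++ z) ∧ nB ∉ lettersP (x ++ y ++ z) := by
  obtain ⟨hAB, hA⟩ := h.fst_ne_of_perm (reduceOption_m2Source_perm x y z nA nB a b)
  obtain ⟨-, hB⟩ := h.fst_ne_of_perm ((reduceOption_m2Source_perm x y z nA nB a b).trans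
    ((List.perm_append_comm (l₁ := [(nA, a), (nA, a)]) (l₂ := [(nB, b), (nB, b)])).append_right _))
  simp only [mem_lettersP]
  exact ⟨hAB, fun ⟨p, hp, he⟩ => hA p hp he, fun ⟨p, hp, he⟩ => hB p hp he⟩

theorem mem_lettersP_m2Source {n : ℕ} :
    n ∈ lettersP (m2Source x y z nA nB a b) ↔ n = nA ∨ n = nB ∨ n ∈ lettersP (x ++ y ++ z) := by
  simp only [mem_lettersP, m2Source, List.reduceOption_append, List.mem_append, List.mem_cons,
    List.reduceOption_cons_of_some, List.reduceOption_nil, Prod.exists, Prod.mk.injEq]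
  aesop

theorem flat_m2Source : flat (m2Source x y z nA nB a b) 1 =
    flat x 1 ++ (nA, a, 1 + nsep x) :: (nB, b, 1 + nsep x) :: (flat y (1 + nsep x) ++
      (nB, b, 1 + nsep x + nsep y) :: (nA, a, 1 + nsep x + nsep y) ::
        flat z (1 + nsep x + nsep y)) := by
  simp [m2Source, flat_append, nsep, flat, Nat.add_assoc]

theorem flat_m2Target :
    flat (x ++ y ++ z) 1 = flat x 1 ++ (flat y (1 + nsep x) ++ flat z (1 + nsep x + nsep y)) := by
  simp [flat_append, nsep, Nat.add_assoc]

variable {x y z nA nB}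

theorem forall_flat_ne_of_not_mem {n : ℕ} (h : n ∉ lettersP (x ++ y ++ z)) :
    (∀ t ∈ flat x 1, t.1 ≠ n) ∧ (∀ t ∈ flat y (1 + nsep x), t.1 ≠ n) ∧
      ∀ t ∈ flat z (1 + nsep x + nsep y), t.1 ≠ n := by
  rw [not_mem_lettersP_iff_flat 1, flat_m2Target] at h
  simpa [or_imp, forall_and] using h

theorem posL_m2Source_left (hAB : nA ≠ nB) (hA : nA ∉ lettersP (x ++ y ++ z)) :
    posL (m2Source x y z nA nB a b) nA =
      [(flat x 1).length, (flat x 1).length + (flat y (1 + nsep x)).length + 3] := by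
  obtain ⟨hx, hy, hz⟩ := forall_flat_ne_of_not_mem hA
  simp only [posL_eq_posFrom, flat_m2Source, posFrom_append, posFrom_eq_nil_iff.2 hx,
    posFrom_eq_nil_iff.2 hy, posFrom_eq_nil_iff.2 hz, posFrom_cons_of_eq, posFrom_cons_of_ne,
    ne_eq, Ne.symm hAB, not_false_eq_true, zero_add, List.nil_append, List.cons.injEq,
    Nat.add_right_cancel_iff, and_true, true_and]
  omega

theorem posL_m2Source_right (hAB : nA ≠ nB) (hB : nB ∉ lettersP (x ++ y ++ z)) :
    posL (m2Source x y z nA nB a b) nB =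
      [(flat x 1).length + 1, (flat x 1).length + (flat y (1 + nsep x)).length + 2] := by
  obtain ⟨hx, hy, hz⟩ := forall_flat_ne_of_not_mem hB
  simp only [posL_eq_posFrom, flat_m2Source, posFrom_append, posFrom_eq_nil_iff.2 hx,
    posFrom_eq_nil_iff.2 hy, posFrom_eq_nil_iff.2 hz, posFrom_cons_of_eq, posFrom_cons_of_ne,
    ne_eq, hAB, not_false_eq_true, zero_add, List.nil_append, List.cons.injEq,
    and_true, true_and]
  omega

theorem posL_m2Source_of_ne {n : ℕ} (hA : n ≠ nA) (hB : n ≠ nB) :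
    posL (m2Source x y z nA nB a b) n = (posL (x ++ y ++ z) n).map
      (m2Shift (flat x 1).length (flat y (1 + nsep x)).length) := by
  set E := (flat x 1).length
  set Y := (flat y (1 + nsep x)).length
  have hx : ∀ p ∈ posFrom (flat x 1) n 0, m2Shift E Y p = p := fun p hp => by
    have := posFrom_bounds hp; simp only [m2Shift]; split_ifs <;> omega
  have hy : ∀ p ∈ posFrom (flat y (1 + nsep x)) n E, m2Shift E Y p = p + 2 := fun p hp => by
    have := posFrom_bounds hp; simp only [m2Shift]; split_ifs <;> omega
  have hz : ∀ p ∈ posFrom (flat z (1 + nsep x + nsep y)) n (E + Y), m2Shift E Y p = p + 4 :=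
    fun p hp => by have := posFrom_bounds hp; simp only [m2Shift]; split_ifs <;> omega
  rw [posL_eq_posFrom, posL_eq_posFrom, flat_m2Source, flat_m2Target, posFrom_append,
    posFrom_cons_of_ne (Ne.symm hA), posFrom_cons_of_ne (Ne.symm hB), posFrom_append,
    posFrom_cons_of_ne (Ne.symm hB), posFrom_cons_of_ne (Ne.symm hA), posFrom_append,
    posFrom_append, List.map_append, List.map_append]
  simp only [zero_add]
  refine congrArg₂ (· ++ ·) ((List.map_congr_left hx).trans (List.map_id _)).symm
    (congrArg₂ (· ++ ·) ?_ ?_)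
  · rw [List.map_congr_left hy, ← posFrom_add]
  · rw [List.map_congr_left hz, ← posFrom_add]
    congr 1
    omega

theorem filter_flat_m2Source_of_ne {n : ℕ} (hA : n ≠ nA) (hB : n ≠ nB) :
    (flat (m2Source x y z nA nB a b) 1).filter (fun t => t.1 = n) =
      (flat (x ++ y ++ z) 1).filter (fun t => t.1 = n) := by
  rw [flat_m2Source, flat_m2Target]
  simp [Ne.symm hA, Ne.symm hB]

theorem filter_flat_m2Source_left (hAB : nA ≠ nB) (hA : nA ∉ lettersP (x ++ y ++ z)) :
    (flat (m2Source x y z nA nB a b) 1).filter (fun t => t.1 = nA) =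
      [(nA, a, 1 + nsep x), (nA, a, 1 + nsep x + nsep y)] := by
  obtain ⟨hx, hy, hz⟩ := forall_flat_ne_of_not_mem hA
  rw [flat_m2Source]
  simp [filter_fst_eq_nil hx, filter_fst_eq_nil hy, filter_fst_eq_nil hz, Ne.symm hAB]

theorem filter_flat_m2Source_right (hAB : nA ≠ nB) (hB : nB ∉ lettersP (x ++ y ++ z)) :
    (flat (m2Source x y z nA nB a b) 1).filter (fun t => t.1 = nB) =
      [(nB, b, 1 + nsep x), (nB, b, 1 + nsep x + nsep y)] := by
  obtain ⟨hx, hy, hz⟩ := forall_flat_ne_of_not_mem hB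
  rw [flat_m2Source]
  simp [filter_fst_eq_nil hx, filter_fst_eq_nil hy, filter_fst_eq_nil hz, hAB]

theorem projP_comp_m2Source [Inhabited α] (hAB : nA ≠ nB) (hA : nA ∉ lettersP (x ++ y ++ z))
    (hB : nB ∉ lettersP (x ++ y ++ z)) :
    projP (m2Source x y z nA nB a b) nA = a ∧ projP (m2Source x y z nA nB a b) nB = b ∧
      comp1 (m2Source x y z nA nB a b) nA = comp1 (m2Source x y z nA nB a b) nB ∧
      comp2 (m2Source x y z nA nB a b) nA = comp2 (m2Source x y z nA nB a b) nB := by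
  simp [projP, comp1, comp2, filter_flat_m2Source_left a b hAB hA,
    filter_flat_m2Source_right a b hAB hB]

theorem mapsLetter_m2Source {n : ℕ} (hn : n ∈ lettersP (x ++ y ++ z))
    (hA : nA ∉ lettersP (x ++ y ++ z)) (hB : nB ∉ lettersP (x ++ y ++ z)) :
    MapsLetter (m2Shift (flat x 1).length (flat y (1 + nsep x)).length) (x ++ y ++ z)
      (m2Source x y z nA nB a b) n := by
  have hnA : n ≠ nA := fun h => hA (h ▸ hn)
  have hnB : n ≠ nB := fun h => hB (h ▸ hn)
  have hpos := posL_m2Source_of_ne (x := x) (y := y) (z := z) (a := a) (b := b) hnA hnB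
  exact ⟨pos1_eq_of_posL_eq_map hpos (posL_ne_nil_of_mem hn),
    pos2_eq_of_posL_eq_map hpos (posL_ne_nil_of_mem hn), filter_flat_m2Source_of_ne a b hnA hnB⟩

theorem pos_m2Source (hAB : nA ≠ nB) (hA : nA ∉ lettersP (x ++ y ++ z))
    (hB : nB ∉ lettersP (x ++ y ++ z)) :
    pos1 (m2Source x y z nA nB a b) nA = (flat x 1).length ∧
      pos2 (m2Source x y z nA nB a b) nA =
        (flat x 1).length + (flat y (1 + nsep x)).length + 3 ∧
      pos1 (m2Source x y z nA nB a b) nB = (flat x 1).length + 1 ∧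
      pos2 (m2Source x y z nA nB a b) nB =
        (flat x 1).length + (flat y (1 + nsep x)).length + 2 := by
  simp [pos1, pos2, posL_m2Source_left a b hAB hA, posL_m2Source_right a b hAB hB]

theorem twins_m2Source {n : ℕ} (hn : n ∈ lettersP (x ++ y ++ z))
    (hAB : nA ≠ nB) (hA : nA ∉ lettersP (x ++ y ++ z)) (hB : nB ∉ lettersP (x ++ y ++ z)) :
    Twins (m2Source x y z nA nB a b) nA nB n := by
  obtain ⟨h1, h2, -⟩ := mapsLetter_m2Source a b hn hA hB
  obtain ⟨hA1, hA2, hB1, hB2⟩ := pos_m2Source a b hAB hA hB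
  intro q hq
  obtain ⟨p, rfl⟩ : ∃ p, q = m2Shift (flat x 1).length (flat y (1 + nsep x)).length p := by
    simp only [List.mem_cons, List.not_mem_nil, or_false, h1, h2] at hq
    rcases hq with rfl | rfl <;> exact ⟨_, rfl⟩
  rw [hA1, hA2, hB1, hB2]
  unfold m2Shift
  split_ifs <;> omega

theorem lettersP_m2Source_perm (hAB : nA ≠ nB) (hA : nA ∉ lettersP (x ++ y ++ z))
    (hB : nB ∉ lettersP (x ++ y ++ z)) :
    (lettersP (m2Source x y z nA nB a b)).Perm (nA :: nB :: lettersP (x ++ y ++ z)) := by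
  refine (List.perm_ext_iff_of_nodup (nodup_lettersP _) ?_).2 fun n => ?_
  · exact List.nodup_cons.2 ⟨fun h => (List.mem_cons.1 h).elim hAB hA,
      List.nodup_cons.2 ⟨hB, nodup_lettersP _⟩⟩
  · simp [mem_lettersP_m2Source]

theorem compLetters_m2Source_perm (hAB : nA ≠ nB) (hA : nA ∉ lettersP (x ++ y ++ z))
    (hB : nB ∉ lettersP (x ++ y ++ z)) (j : ℕ) :
    (compLetters (m2Source x y z nA nB a b) j).Perm
      ((if 1 + nsep x = j ∨ 1 + nsep x + nsep y = j then [nA, nB] else []) ++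
        compLetters (x ++ y ++ z) j) := by
  have hA' : nA ∉ compLetters (x ++ y ++ z) j := fun h => hA (mem_lettersP_of_mem_compLetters h)
  have hB' : nB ∉ compLetters (x ++ y ++ z) j := fun h => hB (mem_lettersP_of_mem_compLetters h)
  refine (List.perm_ext_iff_of_nodup (nodup_compLetters _ _) ?_).2 fun n => ?_
  · split_ifs
    · exact List.nodup_cons.2 ⟨fun h => (List.mem_cons.1 h).elim hAB hA',
        List.nodup_cons.2 ⟨hB', nodup_compLetters _ _⟩⟩
    · exact nodup_compLetters _ _
  · rw [mem_compLetters, List.mem_append, mem_compLetters, flat_m2Source, flat_m2Target]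
    split_ifs <;> aesop

end SecondMove

section SecondMoveInvariance
variable {α : Type} [DecidableEq α] [Inhabited α] {x y z : Phrase α} {nA nB : ℕ}
  (rep : ℕ → α) (orb : α → ℕ) (a b : α)

theorem lHat_m2Source_of_mem (hAB : nA ≠ nB) (hA : nA ∉ lettersP (x ++ y ++ z))
    (hB : nB ∉ lettersP (x ++ y ++ z)) {n : ℕ} (hn : n ∈ lettersP (x ++ y ++ z)) (j : ℕ) :
    lHat rep orb (m2Source x y z nA nB a b) n j =
      (sigmaHat rep orb (m2Source x y z nA nB a b) j n nA +
        sigmaHat rep orb (m2Source x y z nA nB a b) j n nB) + lHat rep orb (x ++ y ++ z) n j := by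
  rw [lHat, ((lettersP_m2Source_perm a b hAB hA hB).map _).sum_eq, List.map_cons, List.map_cons,
    List.sum_cons, List.sum_cons, ← add_assoc, lHat]
  congr 1
  refine congrArg List.sum (List.map_congr_left fun n' hn' => ?_)
  exact sigmaHat_congr rep orb (strictMono_m2Shift _ _) (mapsLetter_m2Source a b hn hA hB)
    (mapsLetter_m2Source a b hn' hA hB) j

theorem lHat_m2Source_left_eq_right (hAB : nA ≠ nB) (hA : nA ∉ lettersP (x ++ y ++ z))
    (hB : nB ∉ lettersP (x ++ y ++ z)) (horb : orb a = orb b) (j : ℕ) :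
    lHat rep orb (m2Source x y z nA nB a b) nA j = lHat rep orb (m2Source x y z nA nB a b) nB j := by
  obtain ⟨hA1, hA2, hB1, hB2⟩ := pos_m2Source a b hAB hA hB
  have hnest := sigmaHat_eq_zero_of_nested rep orb (P := m2Source x y z nA nB a b)
    (nA := nA) (nB := nB) (by omega) (by omega) j
  obtain ⟨hprojA, hprojB, -⟩ := projP_comp_m2Source a b hAB hA hB
  rw [lHat, lHat, ((lettersP_m2Source_perm a b hAB hA hB).map _).sum_eq,
    ((lettersP_m2Source_perm a b hAB hA hB).map _).sum_eq]
  simp only [List.map_cons, List.sum_cons, sigmaHat_self, hnest.1, hnest.2, zero_add]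
  refine congrArg List.sum (List.map_congr_left fun n hn => ?_)
  exact sigmaHat_left_eq_of_twins rep orb (twins_m2Source a b hn hAB hA hB)
    (by rw [hprojA, hprojB, horb]) j

variable {τ : α → α} {l m : ℕ}

theorem sigmaHat_add_sigmaHat_m2Source_mem_Ksub (hcrs : IsCRS τ l m rep orb) (hAB : nA ≠ nB)
    (hA : nA ∉ lettersP (x ++ y ++ z)) (hB : nB ∉ lettersP (x ++ y ++ z)) {n : ℕ}
    (hn : n ∈ lettersP (x ++ y ++ z)) (j : ℕ) :
    sigmaHat rep orb (m2Source x y z nA nB (τ b) b) j n nA +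
      sigmaHat rep orb (m2Source x y z nA nB (τ b) b) j n nB ∈ Ksub l := by
  obtain ⟨hprojA, hprojB, hc1, hc2⟩ := projP_comp_m2Source (τ b) b hAB hA hB
  obtain ⟨c, hc⟩ := sigmaHat_right_add_of_twins rep orb (twins_m2Source (τ b) b hn hAB hA hB)
    hc1 hc2 j
  rw [hc, hprojA, hprojB, hcrs.orb_tau b, ← add_smul]
  exact zsmul_mem (eps_tau_add_eps_smul_ehat_mem_Ksub hcrs b _) c

theorem lP_m2Source_of_mem (hcrs : IsCRS τ l m rep orb) (hAB : nA ≠ nB)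
    (hA : nA ∉ lettersP (x ++ y ++ z)) (hB : nB ∉ lettersP (x ++ y ++ z)) {n : ℕ}
    (hn : n ∈ lettersP (x ++ y ++ z)) :
    lP l rep orb (m2Source x y z nA nB (τ b) b) n = lP l rep orb (x ++ y ++ z) n := by
  funext j
  refine QuotientAddGroup.eq.2 ?_
  rw [lHat_m2Source_of_mem rep orb (τ b) b hAB hA hB hn]
  convert neg_mem (sigmaHat_add_sigmaHat_m2Source_mem_Ksub rep orb b hcrs hAB hA hB hn j) using 1
  abel

theorem lP_m2Source_left_eq_right (hcrs : IsCRS τ l m rep orb) (hAB : nA ≠ nB)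
    (hA : nA ∉ lettersP (x ++ y ++ z)) (hB : nB ∉ lettersP (x ++ y ++ z)) :
    lP l rep orb (m2Source x y z nA nB (τ b) b) nA =
      lP l rep orb (m2Source x y z nA nB (τ b) b) nB :=
  funext fun j => congrArg (kmk l)
    (lHat_m2Source_left_eq_right rep orb (τ b) b hAB hA hB (hcrs.orb_tau b) j)

open Classical in
theorem bSum_m2Source (hcrs : IsCRS τ l m rep orb) (hAB : nA ≠ nB)
    (hA : nA ∉ lettersP (x ++ y ++ z)) (hB : nB ∉ lettersP (x ++ y ++ z)) (j : ℕ)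
    (v : ℕ → KG l) :
    bSum l rep orb (m2Source x y z nA nB (τ b) b) j v =
      (if (1 + nsep x = j ∨ 1 + nsep x + nsep y = j) ∧
          lP l rep orb (m2Source x y z nA nB (τ b) b) nA = v then
        eps rep orb (τ b) + eps rep orb b else 0) + bSum l rep orb (x ++ y ++ z) j v := by
  rw [bSum_eq_add_of_perm l rep orb (compLetters_m2Source_perm (τ b) b hAB hA hB j) ?_ v]
  · obtain ⟨hprojA, hprojB, -⟩ := projP_comp_m2Source (τ b) b hAB hA hB
    have hlP := lP_m2Source_left_eq_right rep orb b hcrs hAB hA hB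
    by_cases hj : 1 + nsep x = j ∨ 1 + nsep x + nsep y = j <;>
      by_cases hv : lP l rep orb (m2Source x y z nA nB (τ b) b) nA = v <;>
      simp [hj, hv, ← hlP, hprojA, hprojB]
  · intro n hn
    have hn' := mem_lettersP_of_mem_compLetters hn
    have hnA : n ≠ nA := fun h => hA (h ▸ hn')
    have hnB : n ≠ nB := fun h => hB (h ▸ hn')
    refine ⟨lP_m2Source_of_mem rep orb b hcrs hAB hA hB hn', ?_⟩
    unfold projP
    rw [filter_flat_m2Source_of_ne _ _ hnA hnB]

theorem soEq_m2Source (hcrs : IsCRS τ l m rep orb) (hAB : nA ≠ nB)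
    (hA : nA ∉ lettersP (x ++ y ++ z)) (hB : nB ∉ lettersP (x ++ y ++ z)) :
    SoEq l rep orb (m2Source x y z nA nB (τ b) b) (x ++ y ++ z) := by
  classical
  intro j v hv
  obtain ⟨hprojA, -⟩ := projP_comp_m2Source (τ b) b hAB hA hB
  obtain ⟨c, hsum, hfree, hmod⟩ : ∃ c : ℤ, bSum l rep orb (m2Source x y z nA nB (τ b) b) j v =
      c + bSum l rep orb (x ++ y ++ z) j v ∧ (TypeI l v → c = 0) ∧ (c : ZMod 2) = 0 := by
    refine ⟨_, bSum_m2Source rep orb b hcrs hAB hA hB j v, fun hT => ?_, ?_⟩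
    · rw [ite_eq_right_iff]
      rintro ⟨-, rfl⟩
      by_cases hb : τ b = b
      · refine absurd (lP_eq_zero_of_typeI rep orb hT ?_) hv
        rw [hprojA, hb]
        exact lt_orb_of_tau_eq hcrs hb
      · exact eps_tau_add_eps hcrs hb
    · split_ifs
      · exact cast_eps_tau_add_eps hcrs b
      · exact Int.cast_zero
  rw [B1_eq, B1_eq, B2_eq, B2_eq, hsum]
  refine ⟨?_, ?_⟩
  · split_ifs with hT
    · rw [hfree hT, zero_add]
    · rfl
  · split_ifs
    · rw [Int.cast_add, hmod, zero_add]
    · rfl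

end SecondMoveInvariance

/-- the invariant `S_o` is invariant under the second homotopy
move: if `P₁ = xAByBAz` with `|A| = τ(|B|)` and `P₂ = xyz` then
`S_o(P₁) = S_o(P₂)`; moreover `l_{P₁}(D) = l_{P₂}(D)` for every letter
`D ∉ {A,B}`, and `ε(A) + ε(B) = 0` in the relevant coefficient group (`ℤ` for a
free orbit, `ℤ/2ℤ` in general). -/
theorem stmt15 {α : Type} [DecidableEq α] [Inhabited α] (τ : α → α) (l m : ℕ)
    (rep : ℕ → α) (orb : α → ℕ) (hcrs : IsCRS τ l m rep orb)
    (x y z : Phrase α) (nA nB : ℕ) (b : α)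
    (P₁ P₂ : Phrase α)
    (h₁ : P₁ = x ++ [some (nA, τ b), some (nB, b)] ++ y ++
      [some (nB, b), some (nA, τ b)] ++ z)
    (h₂ : P₂ = x ++ y ++ z)
    (hnano : isNanoP P₁) :
    SoEq l rep orb P₁ P₂ ∧
    (∀ nD ∈ lettersP P₁, nD ≠ nA → nD ≠ nB →
      ∀ j : ℕ, lP l rep orb P₁ nD j = lP l rep orb P₂ nD j) ∧
    (τ b ≠ b → eps rep orb (τ b) + eps rep orb b = 0) ∧
    ((eps rep orb (τ b) + eps rep orb b : ℤ) : ZMod 2) = 0 := by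
  obtain rfl : P₁ = m2Source x y z nA nB (τ b) b := h₁
  subst h₂
  obtain ⟨hAB, hA, hB⟩ := m2Source_letters_of_isNanoP x y z nA nB (τ b) b hnano
  refine ⟨soEq_m2Source rep orb b hcrs hAB hA hB, fun nD hD hDA hDB j => ?_,
    eps_tau_add_eps hcrs, cast_eps_tau_add_eps hcrs b⟩
  have hD' : nD ∈ lettersP (x ++ y ++ z) := by
    simpa [hDA, hDB] using (mem_lettersP_m2Source x y z nA nB (τ b) b).1 hD
  exact congrFun (lP_m2Source_of_mem rep orb b hcrs hAB hA hB hD') j
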